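/- Let W be the first Weyl algebra over a field k of characteristic zero and let ∂_q denote the derivation on M_N(W) given by ∂_q(a) = [a, p]. If {a_n}_{n≥0} is a sequence in M_N(W) with ∂_q(a_n) = n·a_{n-1} (and ∂_q(a_0) = 0) such that a_n ∈ M_N(W)·q for all sufficiently large n, then there exist finitely many matrices A_0, ..., A_m ∈ M_N(k[p]) such that a_n = Σ_{s=0}^{m} C(n,s)·A_s·q^{n-s} for all n ≥ 0. -/

import Mathlib

open Polynomial

set_option synthInstance.maxHeartbeats 1000000
set_option maxHeartbeats 1000000

noncomputable section

variable (k : Type*) [Field k] [CharZero k]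

/-- The operator `p`: multiplication by `X` on `k[X]`. -/
def pOp : Module.End k (Polynomial k) := LinearMap.mulLeft k (X : Polynomial k)

/-- The operator `q = d/dX` on `k[X]`. -/
def qOp : Module.End k (Polynomial k) := derivative

/-- The (first) Weyl algebra, realized concretely as the subalgebra of
`End_k(k[X])` generated by multiplication by `X` and `d/dX`.  (In characteristic
zero this is a faithful model of `k⟨p,q | qp - pq = 1⟩`.) -/
def WeylA : Subalgebra k (Module.End k (Polynomial k)) :=
  Algebra.adjoin k {pOp k, qOp k}

/-- The element `p` of the Weyl algebra. -/
def pW : WeylA k := ⟨pOp k, Algebra.subset_adjoin (Set.mem_insert _ _)⟩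

/-- The element `q` of the Weyl algebra. -/
def qW : WeylA k := ⟨qOp k, Algebra.subset_adjoin (Set.mem_insert_of_mem _ rfl)⟩

variable (N : ℕ)

/-- `M_N(W)`, the `N×N` matrices over the Weyl algebra. -/
abbrev MW := Matrix (Fin N) (Fin N) (WeylA k)

/-- The scalar matrix `p·Id_N`. -/
def pM : MW k N := Matrix.diagonal fun _ => pW k

/-- The scalar matrix `q·Id_N`. -/
def qM : MW k N := Matrix.diagonal fun _ => qW k

/-- The derivation `∂_q(a) = [a,p]` on `M_N(W)`. -/
def dq (a : MW k N) : MW k N := a * pM k N - pM k N * a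

/-- Evaluation of a polynomial at `p`, i.e. the embedding `k[p] → W`. -/
def polyP : Polynomial k →ₐ[k] WeylA k := Polynomial.aeval (pW k)

/-- Evaluation of a polynomial at `q`, i.e. the embedding `k[q] → W`. -/
def polyQ : Polynomial k →ₐ[k] WeylA k := Polynomial.aeval (qW k)

/-! Writing `∂ = ⁅·, p⁆`, the relation `⁅q, p⁆ = 1` gives `∂ (A q^(e+1)) = (e+1) A q^e` for
`∂ A = 0`, so `∂` lowers the sums `∑ C(n,s) A_s q^(n-s)` exactly as it lowers `a_n`. Solving
`a_n = ∑_{s ≤ n} C(n,s) A_s q^(n-s)` for `A_n` recursively, induction gives `∂ A_n = 0`. Once `a_n`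
is a left multiple of `q`, so is `A_n` (all other terms carry a factor `q`), hence `A_n = 0`
by the two facts about `W` below.

If `w` commutes with `p`, then `w g = w (g(p) 1) = g(p) (w 1)`, so the centralizer of `p` in
`M_N(W)` is `M_N(k[p])`; and `q` kills `1 ∈ k[X]`, so no nonzero matrix over `k[p]` is a left
multiple of `q`. -/

section DifferentialSequence

attribute [local instance] LieRing.ofAssociativeRing

variable {R : Type*} [Ring R] {p q : R}

theorem Ring.mul_lie (x y z : R) : ⁅x * y, z⁆ = x * ⁅y, z⁆ + ⁅x, z⁆ * y := by
  simp only [Ring.lie_def]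
  noncomm_ring

theorem lie_pow_succ_of_lie_eq_one (hqp : ⁅q, p⁆ = 1) (e : ℕ) :
    ⁅q ^ (e + 1), p⁆ = (e + 1) • q ^ e := by
  induction e with
  | zero => simp [hqp]
  | succ e ih =>
    rw [pow_succ, Ring.mul_lie, ih, hqp, mul_one, smul_mul_assoc, ← pow_succ,
      succ_nsmul' _ (e + 1)]

theorem lie_choose_smul_mul_pow (hqp : ⁅q, p⁆ = 1) {A : R} (hA : ⁅A, p⁆ = 0) (n s : ℕ) :
    ⁅(n + 1).choose s • (A * q ^ (n + 1 - s)), p⁆ = (n + 1) • n.choose s • (A * q ^ (n - s)) := by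
  rcases le_or_gt s n with hsn | hns
  · rw [show n + 1 - s = n - s + 1 by omega, nsmul_lie, Ring.mul_lie, hA, zero_mul, add_zero,
      lie_pow_succ_of_lie_eq_one hqp, mul_smul_comm, smul_smul, smul_smul,
      show n - s + 1 = n + 1 - s by omega, ← Nat.choose_mul_succ_eq, mul_comm]
  · rw [show n + 1 - s = 0 by omega, pow_zero, mul_one, nsmul_lie, hA, smul_zero,
      Nat.choose_eq_zero_of_lt hns, zero_smul, smul_zero]

theorem lie_sum_choose_smul_mul_pow (hqp : ⁅q, p⁆ = 1) (t : Finset ℕ) {A : ℕ → R}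
    (hA : ∀ s ∈ t, ⁅A s, p⁆ = 0) (n : ℕ) :
    ⁅∑ s ∈ t, (n + 1).choose s • (A s * q ^ (n + 1 - s)), p⁆ =
      (n + 1) • ∑ s ∈ t, n.choose s • (A s * q ^ (n - s)) := by
  rw [sum_lie, Finset.smul_sum]
  exact Finset.sum_congr rfl fun s hs => lie_choose_smul_mul_pow hqp (hA s hs) n s

theorem sum_range_choose_smul_mul_pow_eq_mul (A : ℕ → R) (n : ℕ) :
    ∑ s ∈ Finset.range n, n.choose s • (A s * q ^ (n - s)) =
      (∑ s ∈ Finset.range n, n.choose s • (A s * q ^ (n - s - 1))) * q := by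
  rw [Finset.sum_mul]
  refine Finset.sum_congr rfl fun s hs => ?_
  rw [smul_mul_assoc, mul_assoc, ← pow_succ,
    Nat.sub_add_cancel (Nat.sub_pos_of_lt (Finset.mem_range.mp hs))]

def diffSeqCoeff (q : R) (a : ℕ → R) : ℕ → R
  | n => a n - ∑ s : Fin n, n.choose s • (diffSeqCoeff q a s * q ^ (n - s))

variable (a : ℕ → R)

theorem diffSeqCoeff_eq (n : ℕ) :
    diffSeqCoeff q a n =
      a n - ∑ s ∈ Finset.range n, n.choose s • (diffSeqCoeff q a s * q ^ (n - s)) := by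
  rw [diffSeqCoeff,
    Fin.sum_univ_eq_sum_range (fun s => n.choose s • (diffSeqCoeff q a s * q ^ (n - s)))]

theorem sum_range_choose_smul_diffSeqCoeff (n : ℕ) :
    ∑ s ∈ Finset.range (n + 1), n.choose s • (diffSeqCoeff q a s * q ^ (n - s)) = a n := by
  rw [Finset.sum_range_succ, Nat.choose_self, Nat.sub_self, pow_zero, mul_one, one_smul,
    diffSeqCoeff_eq a n, add_sub_cancel]

theorem lie_diffSeqCoeff_eq_zero (hqp : ⁅q, p⁆ = 1) (h0 : ⁅a 0, p⁆ = 0)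
    (hrec : ∀ n : ℕ, ⁅a (n + 1), p⁆ = (n + 1) • a n) (n : ℕ) :
    ⁅diffSeqCoeff q a n, p⁆ = 0 := by
  induction n using Nat.strong_induction_on with
  | _ n ih =>
    rcases n with _ | n
    · rwa [diffSeqCoeff_eq, Finset.range_zero, Finset.sum_empty, sub_zero]
    · rw [diffSeqCoeff_eq, sub_lie, hrec,
        lie_sum_choose_smul_mul_pow hqp _ (fun s hs => ih s (Finset.mem_range.mp hs)),
        sum_range_choose_smul_diffSeqCoeff, sub_self]

theorem diffSeqCoeff_eq_zero (hqp : ⁅q, p⁆ = 1)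
    (hker : ∀ b y : R, ⁅b, p⁆ = 0 → b = y * q → b = 0) (h0 : ⁅a 0, p⁆ = 0)
    (hrec : ∀ n : ℕ, ⁅a (n + 1), p⁆ = (n + 1) • a n) {n : ℕ} (hn : ∃ y, a n = y * q) :
    diffSeqCoeff q a n = 0 := by
  obtain ⟨y, hy⟩ := hn
  refine hker _ (y - ∑ s ∈ Finset.range n, n.choose s • (diffSeqCoeff q a s * q ^ (n - s - 1)))
    (lie_diffSeqCoeff_eq_zero a hqp h0 hrec n) ?_
  rw [diffSeqCoeff_eq, hy, sum_range_choose_smul_mul_pow_eq_mul, ← sub_mul]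

theorem exists_eq_sum_choose_smul_mul_pow (hqp : ⁅q, p⁆ = 1)
    (hker : ∀ b y : R, ⁅b, p⁆ = 0 → b = y * q → b = 0) (h0 : ⁅a 0, p⁆ = 0)
    (hrec : ∀ n : ℕ, ⁅a (n + 1), p⁆ = (n + 1) • a n)
    (hq : ∃ n₀ : ℕ, ∀ n ≥ n₀, ∃ y, a n = y * q) :
    ∃ (m : ℕ) (A : ℕ → R), (∀ s, ⁅A s, p⁆ = 0) ∧
      ∀ n, a n = ∑ s ∈ Finset.range (m + 1), n.choose s • (A s * q ^ (n - s)) := by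
  obtain ⟨n₀, hn₀⟩ := hq
  refine ⟨n₀, diffSeqCoeff q a, lie_diffSeqCoeff_eq_zero a hqp h0 hrec, fun n => ?_⟩
  have hchoose : ∀ s ≥ n + 1, n.choose s • (diffSeqCoeff q a s * q ^ (n - s)) = 0 :=
    fun s hs => by rw [Nat.choose_eq_zero_of_lt hs, zero_smul]
  have hcoeff : ∀ s ≥ n₀ + 1, n.choose s • (diffSeqCoeff q a s * q ^ (n - s)) = 0 :=
    fun s hs => by
      rw [diffSeqCoeff_eq_zero a hqp hker h0 hrec (hn₀ s (by omega)), zero_mul, smul_zero]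
  rw [← sum_range_choose_smul_diffSeqCoeff a n,
    ← Finset.eventually_constant_sum hchoose (by omega : n + 1 ≤ n + n₀ + 2),
    Finset.eventually_constant_sum hcoeff (by omega : n₀ + 1 ≤ n + n₀ + 2)]

end DifferentialSequence

section

omit [CharZero k]

variable {k N}

theorem eq_mulLeft_apply_one_of_commute_mulLeft_X {w : Module.End k k[X]}
    (hw : Commute (LinearMap.mulLeft k X) w) : w = LinearMap.mulLeft k (w 1) := by
  have hpow : ∀ n, w (X ^ n) = X ^ n * w 1 := fun n => by
    simpa [LinearMap.pow_mulLeft] using (LinearMap.congr_fun (hw.pow_left n).eq 1).symm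
  refine Polynomial.lhom_ext' fun n => LinearMap.ext fun c => ?_
  rw [LinearMap.comp_apply, LinearMap.comp_apply, ← C_mul_X_pow_eq_monomial, ← smul_eq_C_mul,
    map_smul, hpow, LinearMap.mulLeft_apply, mul_smul_comm, mul_comm]

theorem coe_polyP (f : k[X]) : (polyP k f : Module.End k k[X]) = LinearMap.mulLeft k f := by
  calc (polyP k f : Module.End k k[X]) = aeval (pOp k) f :=
        (aeval_algHom_apply (WeylA k).val (pW k) f).symm
    _ = Algebra.lmul k k[X] (aeval X f) := aeval_algHom_apply (Algebra.lmul k k[X]) X f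
    _ = LinearMap.mulLeft k f := by rw [aeval_X_left_apply]; rfl

theorem lie_qW_pW : ⁅qW k, pW k⁆ = 1 := by
  refine Subtype.ext (LinearMap.ext fun f => ?_)
  simp [Ring.lie_def, qW, pW, qOp, pOp, derivative_mul]

theorem exists_polyP_eq_of_commute_pW {w : WeylA k} (hw : Commute w (pW k)) :
    ∃ f : k[X], polyP k f = w :=
  ⟨(w : Module.End k k[X]) 1, Subtype.ext <| by
    rw [coe_polyP]
    exact (eq_mulLeft_apply_one_of_commute_mulLeft_X (hw.map (WeylA k).val).symm).symm⟩

theorem eq_zero_of_polyP_eq_mul_qW {f : k[X]} {y : WeylA k} (h : polyP k f = y * qW k) :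
    f = 0 := by
  simpa [coe_polyP, qW, qOp] using LinearMap.congr_fun (congrArg Subtype.val h) 1

theorem lie_pM_apply (b : MW k N) (i j : Fin N) : ⁅b, pM k N⁆ i j = ⁅b i j, pW k⁆ := by
  simp [Ring.lie_def, pM, Matrix.mul_diagonal, Matrix.diagonal_mul]

theorem lie_qM_pM : ⁅qM k N, pM k N⁆ = 1 := by
  refine Matrix.ext fun i j => ?_
  by_cases hij : i = j
  · subst hij
    simp [lie_pM_apply, qM, lie_qW_pW]
  · simp [lie_pM_apply, qM, hij, Ring.lie_def]

theorem exists_map_polyP_eq_of_lie_pM_eq_zero {b : MW k N} (hb : ⁅b, pM k N⁆ = 0) :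
    ∃ B : Matrix (Fin N) (Fin N) k[X], B.map (polyP k) = b := by
  have hcomm : ∀ i j, Commute (b i j) (pW k) := fun i j =>
    commute_iff_lie_eq.mpr (by rw [← lie_pM_apply b i j, hb, Matrix.zero_apply])
  choose B hB using fun i j => exists_polyP_eq_of_commute_pW (hcomm i j)
  exact ⟨Matrix.of B, Matrix.ext fun i j => hB i j⟩

theorem eq_zero_of_lie_pM_eq_zero_of_eq_mul_qM {b y : MW k N} (hb : ⁅b, pM k N⁆ = 0)
    (hby : b = y * qM k N) : b = 0 := by
  obtain ⟨B, rfl⟩ := exists_map_polyP_eq_of_lie_pM_eq_zero hb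
  ext i j
  have hij := congrFun (congrFun hby i) j
  rw [Matrix.map_apply, qM, Matrix.mul_diagonal] at hij
  rw [Matrix.map_apply, eq_zero_of_polyP_eq_mul_qW hij, map_zero, Matrix.zero_apply]

end

theorem differential_sequence_eq (N : ℕ) (a : ℕ → MW k N)
    (h0 : dq k N (a 0) = 0)
    (hrec : ∀ n : ℕ, dq k N (a (n + 1)) = (n + 1) • a n)
    (hq : ∃ n₀ : ℕ, ∀ n ≥ n₀, ∃ y : MW k N, a n = y * qM k N) :
    ∃ (m : ℕ) (A : ℕ → Matrix (Fin N) (Fin N) (Polynomial k)),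
      ∀ n : ℕ, a n = ∑ s ∈ Finset.range (m + 1),
        (n.choose s) • ((A s).map (polyP k) * qM k N ^ (n - s)) := by
  obtain ⟨m, A, hA, ha⟩ := exists_eq_sum_choose_smul_mul_pow a lie_qM_pM
    (fun _ _ => eq_zero_of_lie_pM_eq_zero_of_eq_mul_qM) h0 hrec hq
  choose B hB using fun s => exists_map_polyP_eq_of_lie_pM_eq_zero (hA s)
  exact ⟨m, B, fun n => by simpa only [hB] using ha n⟩

end
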